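/- arXiv:2208.03236 — 3 statements merged into one kernel-verified Lean document; each statement's English description precedes it below -/
import Mathlib

section
/- Every positive semidefinite n×n complex Toeplitz matrix T can be written as a finite nonnegative combination T = Σ_{j=1}^m α_j T_n(λ_j) with α_j ≥ 0 and λ_j on the unit circle. -/
open Matrix ComplexOrder
open scoped ComplexInnerProductSpace

variable {E : Type*} [NormedAddCommGroup E] [InnerProductSpace ℂ E] [FiniteDimensional ℂ E]

lemma eig_pow (U : E →ₗ[ℂ] E) (x : E) (c : ℂ) (h : U x = c • x) (k : ℕ) :
    (U ^ k) x = c ^ k • x := by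
  induction k with
  | zero => simp
  | succ k ih =>
    rw [pow_succ', Module.End.mul_apply, ih, LinearMap.map_smul, h, smul_smul, pow_succ']
    ring_nf

lemma unitary_moment (U : E →ₗ[ℂ] E) (hU : ∀ x y : E, ⟪U x, U y⟫ = ⟪x, y⟫) (v : E) :
    ∃ (m : ℕ) (α : Fin m → ℝ) (lam : Fin m → ℂ),
      (∀ i, 0 ≤ α i) ∧ (∀ i, ‖lam i‖ = 1) ∧
      ∀ k j : ℕ, ⟪(U ^ k) v, (U ^ j) v⟫ = ∑ i, (α i : ℂ) * (lam i) ^ ((k : ℤ) - (j : ℤ)) := by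
  classical
  -- U is injective hence bijective
  have hinj : Function.Injective U := by
    intro x y hxy
    have : ⟪x - y, x - y⟫ = 0 := by
      have := hU (x - y) (x - y)
      rw [map_sub, hxy, sub_self] at this
      simpa using this.symm
    simpa [sub_eq_zero] using inner_self_eq_zero.mp this
  have hsurj : Function.Surjective U := (LinearMap.injective_iff_surjective).mp hinj
  set Us := LinearMap.adjoint U with hUs
  have hUsU : ∀ x, Us (U x) = x := by
    intro x
    apply ext_inner_left ℂ
    intro z
    rw [LinearMap.adjoint_inner_right, hU]
  have hUUs : ∀ x, U (Us x) = x := by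
    intro x
    obtain ⟨y, rfl⟩ := hsurj x
    rw [hUsU]
  have hmulUUs : U * Us = 1 := LinearMap.ext hUUs
  have hmulUsU : Us * U = 1 := LinearMap.ext hUsU
  set A := U + Us with hA
  set Bo := Complex.I • (U - Us) with hBo
  have hAsym : A.IsSymmetric := by
    intro x y
    simp only [hA, LinearMap.add_apply, inner_add_left, inner_add_right]
    rw [LinearMap.adjoint_inner_left, ← LinearMap.adjoint_inner_right U]
    ring
  have hBsym : Bo.IsSymmetric := by
    intro x y
    simp only [hBo, LinearMap.smul_apply, LinearMap.sub_apply, inner_smul_left, inner_smul_right,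
      inner_sub_left, inner_sub_right, Complex.conj_I]
    rw [LinearMap.adjoint_inner_left, ← LinearMap.adjoint_inner_right U]
    ring
  have hcomm : Commute A Bo := by
    have h0 : Commute (U + Us) (U - Us) := by
      show _ = _
      rw [add_mul, mul_add, mul_sub, sub_mul, sub_mul, mul_sub, hmulUUs, hmulUsU]
    exact (h0.smul_right Complex.I : Commute A Bo)
  have htop := LinearMap.IsSymmetric.iSup_iSup_eigenspace_inf_eigenspace_eq_top_of_commute
    hAsym hBsym hcomm
  have hvmem : v ∈ ⨆ p : ℂ × ℂ,
      (Module.End.eigenspace A p.1 ⊓ Module.End.eigenspace Bo p.2) := by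
    rw [iSup_prod, htop]; trivial
  rw [Submodule.mem_iSup_iff_exists_finsupp] at hvmem
  obtain ⟨f, hf, hfsum⟩ := hvmem
  -- each f p is an eigenvector of U
  set lamf : ℂ × ℂ → ℂ := fun p => (p.1 - Complex.I * p.2) / 2 with hlamf
  have heig : ∀ p, U (f p) = lamf p • f p := by
    intro p
    obtain ⟨h1, h2⟩ := hf p
    have h1' : A (f p) = p.1 • f p := Module.End.mem_eigenspace_iff.mp h1
    have h2' : Bo (f p) = p.2 • f p := Module.End.mem_eigenspace_iff.mp h2
    have hA' : U (f p) + Us (f p) = p.1 • f p := by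
      simpa [hA] using h1'
    have hB' : U (f p) - Us (f p) = (-(Complex.I) * p.2) • f p := by
      have h3 : Complex.I • (U (f p) - Us (f p)) = p.2 • f p := by
        simpa [hBo] using h2'
      have := congrArg (fun z => (-(Complex.I)) • z) h3
      simpa [smul_smul, Complex.I_mul_I] using this
    have h2U : (2 : ℂ) • U (f p) = (p.1 - Complex.I * p.2) • f p := by
      rw [two_smul]
      calc U (f p) + U (f p) = (U (f p) + Us (f p)) + (U (f p) - Us (f p)) := by abel
      _ = p.1 • f p + (-Complex.I * p.2) • f p := by rw [hA', hB']
      _ = (p.1 - Complex.I * p.2) • f p := by rw [← add_smul]; ring_nf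
    have h4 := congrArg (fun z => (2 : ℂ)⁻¹ • z) h2U
    simp only [smul_smul] at h4
    rw [inv_mul_cancel₀ (two_ne_zero), one_smul] at h4
    rw [h4, hlamf]
    simp only [smul_smul]
    congr 1
    ring
  -- norm preservation
  have hUnorm : ∀ x : E, ‖U x‖ = ‖x‖ := by
    intro x
    have h := hU x x
    rw [inner_self_eq_norm_sq_to_K, inner_self_eq_norm_sq_to_K] at h
    have h' : ‖U x‖ ^ 2 = ‖x‖ ^ 2 := by exact_mod_cast h
    calc ‖U x‖ = Real.sqrt (‖U x‖ ^ 2) := (Real.sqrt_sq (norm_nonneg _)).symm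
    _ = Real.sqrt (‖x‖ ^ 2) := by rw [h']
    _ = ‖x‖ := Real.sqrt_sq (norm_nonneg _)
  have hnorm1 : ∀ p ∈ f.support, ‖lamf p‖ = 1 := by
    intro p hp
    have hne : f p ≠ 0 := Finsupp.mem_support_iff.mp hp
    have h1 : ‖lamf p • f p‖ = ‖f p‖ := by rw [← heig p]; exact hUnorm _
    rw [norm_smul] at h1
    have h2 : ‖f p‖ ≠ 0 := norm_ne_zero_iff.mpr hne
    field_simp at h1
    exact h1
  have hortho : ∀ p q : ℂ × ℂ, p ≠ q → ⟪f p, f q⟫ = 0 := by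
    intro p q hpq
    obtain h | h : p.1 ≠ q.1 ∨ p.2 ≠ q.2 := by
      rwa [Ne, Prod.ext_iff, not_and_or] at hpq
    · exact hAsym.orthogonalFamily_eigenspaces h ⟨f p, (hf p).1⟩ ⟨f q, (hf q).1⟩
    · exact hBsym.orthogonalFamily_eigenspaces h ⟨f p, (hf p).2⟩ ⟨f q, (hf q).2⟩
  -- conjugate inverse on the circle
  have hcirc : ∀ c : ℂ, ‖c‖ = 1 → ∀ k j : ℕ,
      c ^ ((k : ℤ) - (j : ℤ)) = c ^ k * (starRingEnd ℂ) c ^ j := by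
    intro c hc k j
    have hcne : c ≠ 0 := by
      intro h; rw [h] at hc; simp at hc
    have hinv : c⁻¹ = (starRingEnd ℂ) c := by
      rw [Complex.inv_def, Complex.normSq_eq_norm_sq, hc]
      simp
    rw [zpow_sub₀ hcne, zpow_natCast, zpow_natCast, div_eq_mul_inv, ← inv_pow, hinv]
  set s := f.support with hs
  refine ⟨s.card, fun i => ‖f (s.equivFin.symm i)‖ ^ 2,
    fun i => (starRingEnd ℂ) (lamf (s.equivFin.symm i)), fun i => sq_nonneg _, ?_, ?_⟩
  · intro i
    rw [Complex.norm_conj]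
    exact hnorm1 _ (s.equivFin.symm i).2
  intro k j
  have hterm : ∀ k : ℕ, (U ^ k) v = ∑ p ∈ s, lamf p ^ k • f p := by
    intro k
    rw [← hfsum, Finsupp.sum, map_sum]
    exact Finset.sum_congr rfl fun p _ => eig_pow U (f p) (lamf p) (heig p) k
  have hin : ∀ p ∈ s, ⟪lamf p ^ k • f p, ∑ q ∈ s, lamf q ^ j • f q⟫
      = ((‖f p‖ ^ 2 : ℝ) : ℂ) * ((starRingEnd ℂ) (lamf p) ^ k * lamf p ^ j) := by
    intro p hp
    rw [inner_sum, Finset.sum_eq_single_of_mem p hp]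
    · rw [inner_smul_left, inner_smul_right, inner_self_eq_norm_sq_to_K, map_pow]
      push_cast
      ring_nf
      rfl
    · intro q hq hqp
      rw [inner_smul_left, inner_smul_right, hortho p q (Ne.symm hqp), mul_zero, mul_zero]
  have F : ℂ × ℂ → ℂ := fun p => ((‖f p‖ ^ 2 : ℝ) : ℂ)
      * ((starRingEnd ℂ) (lamf p) ^ k * lamf p ^ j)
  calc ⟪(U ^ k) v, (U ^ j) v⟫
      = ∑ p ∈ s, ((‖f p‖ ^ 2 : ℝ) : ℂ) * ((starRingEnd ℂ) (lamf p) ^ k * lamf p ^ j) := by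
        rw [hterm, hterm, sum_inner]
        exact Finset.sum_congr rfl hin
    _ = ∑ i : s, ((‖f (i : ℂ × ℂ)‖ ^ 2 : ℝ) : ℂ)
          * ((starRingEnd ℂ) (lamf (i : ℂ × ℂ)) ^ k * lamf (i : ℂ × ℂ) ^ j) :=
        (Finset.sum_coe_sort s _).symm
    _ = ∑ i : Fin s.card, ((‖f (s.equivFin.symm i : ℂ × ℂ)‖ ^ 2 : ℝ) : ℂ)
          * ((starRingEnd ℂ) (lamf (s.equivFin.symm i : ℂ × ℂ)) ^ k
            * lamf (s.equivFin.symm i : ℂ × ℂ) ^ j) :=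
        (Equiv.sum_comp s.equivFin.symm _).symm
    _ = _ := Finset.sum_congr rfl fun i _ => by
        rw [hcirc _ (by rw [Complex.norm_conj]; exact hnorm1 _ (s.equivFin.symm i).2) k j]
        rw [Complex.conj_conj]


lemma norm_eq_of_inner_self_eq {x y : E} (h : ⟪x, x⟫ = ⟪y, y⟫) : ‖x‖ = ‖y‖ := by
  rw [inner_self_eq_norm_sq_to_K, inner_self_eq_norm_sq_to_K] at h
  have h' : ‖x‖ ^ 2 = ‖y‖ ^ 2 := by exact_mod_cast h
  calc ‖x‖ = Real.sqrt (‖x‖ ^ 2) := (Real.sqrt_sq (norm_nonneg _)).symm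
  _ = Real.sqrt (‖y‖ ^ 2) := by rw [h']
  _ = ‖y‖ := Real.sqrt_sq (norm_nonneg _)

/-- The universal positive Toeplitz matrix `T_n(z)`, with `(k,j)` entry `z^(k-j)`. -/
noncomputable def Tmat (n : ℕ) (z : ℂ) : Matrix (Fin n) (Fin n) ℂ :=
  Matrix.of fun k j => z ^ ((k : ℤ) - (j : ℤ))

theorem stmt5 (n : ℕ) (τ : ℤ → ℂ) (T : Matrix (Fin n) (Fin n) ℂ)
    (hT : ∀ i j : Fin n, T i j = τ ((i : ℤ) - (j : ℤ)))
    (hpos : T.PosSemidef) :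
    ∃ (m : ℕ) (α : Fin m → ℝ) (lam : Fin m → ℂ),
      (∀ j, 0 ≤ α j) ∧ (∀ j, ‖lam j‖ = 1) ∧
      T = ∑ j, (α j : ℂ) • Tmat n (lam j) := by
  classical
  rcases Nat.eq_zero_or_pos n with hn | hn
  · subst hn
    refine ⟨0, Fin.elim0, Fin.elim0, fun j => j.elim0, fun j => j.elim0, ?_⟩
    ext i j
    exact i.elim0
  obtain ⟨N, rfl⟩ : ∃ N, n = N + 1 := ⟨n - 1, (Nat.succ_pred_eq_of_pos hn).symm⟩
  obtain ⟨Bm, hBm⟩ : ∃ B : Matrix (Fin (N + 1)) (Fin (N + 1)) ℂ, T = Bᴴ * B := by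
    open scoped MatrixOrder in exact CStarAlgebra.nonneg_iff_eq_star_mul_self.mp hpos.nonneg
  set b : Fin (N + 1) → EuclideanSpace ℂ (Fin (N + 1)) := fun j => WithLp.toLp 2 (fun i => Bm i j) with hb
  have hGram : ∀ k j, ⟪b k, b j⟫ = T k j := by
    intro k j
    rw [hBm]
    simp [hb, Matrix.mul_apply, EuclideanSpace, PiLp.inner_apply, RCLike.inner_apply,
      Matrix.conjTranspose_apply, mul_comm]
  have hshift : ∀ i j : Fin N, ⟪b i.succ, b j.succ⟫ = ⟪b i.castSucc, b j.castSucc⟫ := by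
    intro i j
    rw [hGram, hGram, hT, hT]
    congr 1
    push_cast [Fin.val_succ, Fin.coe_castSucc]
    ring
  set g : (Fin N → ℂ) →ₗ[ℂ] EuclideanSpace ℂ (Fin (N + 1)) :=
    { toFun := fun x => ∑ i : Fin N, x i • b i.castSucc
      map_add' := by intro x y; simp [add_smul, Finset.sum_add_distrib]
      map_smul' := by intro c x; simp [smul_smul, Finset.smul_sum] } with hg
  set fm : (Fin N → ℂ) →ₗ[ℂ] EuclideanSpace ℂ (Fin (N + 1)) :=
    { toFun := fun x => ∑ i : Fin N, x i • b i.succ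
      map_add' := by intro x y; simp [add_smul, Finset.sum_add_distrib]
      map_smul' := by intro c x; simp [smul_smul, Finset.smul_sum] } with hfm
  have hfg : ∀ x y : Fin N → ℂ, ⟪fm x, fm y⟫ = ⟪g x, g y⟫ := by
    intro x y
    simp only [hg, hfm, LinearMap.coe_mk, AddHom.coe_mk, sum_inner, inner_sum,
      inner_smul_left, inner_smul_right]
    refine Finset.sum_congr rfl fun i _ => ?_
    congr 1
    exact Finset.sum_congr rfl fun j _ => by rw [hshift]
  have hnormfg : ∀ x : Fin N → ℂ, ‖fm x‖ = ‖g x‖ := fun x =>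
    norm_eq_of_inner_self_eq (hfg x x)
  have hker : LinearMap.ker g ≤ LinearMap.ker fm := by
    intro x hx
    rw [LinearMap.mem_ker] at hx ⊢
    have := hnormfg x
    rw [hx, norm_zero, norm_eq_zero] at this
    exact this
  set L0 : LinearMap.range g →ₗ[ℂ] EuclideanSpace ℂ (Fin (N + 1)) :=
    (Submodule.liftQ (LinearMap.ker g) fm hker).comp
      (LinearMap.quotKerEquivRange g).symm.toLinearMap with hL0def
  have hL0 : ∀ x : Fin N → ℂ, L0 ⟨g x, LinearMap.mem_range_self g x⟩ = fm x := by
    intro x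
    have h0 : (LinearMap.quotKerEquivRange g) (Submodule.Quotient.mk x)
        = ⟨g x, LinearMap.mem_range_self g x⟩ :=
      Subtype.ext (LinearMap.quotKerEquivRange_apply_mk g x)
    have h1 : (LinearMap.quotKerEquivRange g).symm ⟨g x, LinearMap.mem_range_self g x⟩
        = Submodule.Quotient.mk x := by
      rw [LinearEquiv.symm_apply_eq]
      exact h0.symm
    simp [hL0def, h1]
  have hL0norm : ∀ v : LinearMap.range g, ‖L0 v‖ = ‖v‖ := by
    rintro ⟨-, x, rfl⟩
    rw [hL0 x]
    exact hnormfg x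
  set Liso : LinearMap.range g →ₗᵢ[ℂ] EuclideanSpace ℂ (Fin (N + 1)) := ⟨L0, hL0norm⟩ with hLiso
  set Uiso := Liso.extend with hUiso
  set U := Uiso.toLinearMap with hU
  have hUb : ∀ i : Fin N, U (b i.castSucc) = b i.succ := by
    intro i
    have hx : g (Pi.single i 1) = b i.castSucc := by
      simp [hg, Pi.single_apply, ite_smul]
    have h2 := Liso.extend_apply ⟨g (Pi.single i 1), LinearMap.mem_range_self g _⟩
    calc U (b i.castSucc) = Uiso (g (Pi.single i 1)) := by rw [hx]; rfl
    _ = Liso ⟨g (Pi.single i 1), LinearMap.mem_range_self g _⟩ := h2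
    _ = fm (Pi.single i 1) := hL0 _
    _ = b i.succ := by simp [hfm, Pi.single_apply, ite_smul]
  have hpow : ∀ j : Fin (N + 1), (U ^ (j : ℕ)) (b 0) = b j := by
    intro j
    induction j using Fin.induction with
    | zero => simp
    | succ i ih =>
      rw [Fin.val_succ, pow_succ', Module.End.mul_apply]
      have : ((i.castSucc : Fin (N+1)) : ℕ) = (i : ℕ) := rfl
      rw [show ((i : ℕ)) = ((i.castSucc : Fin (N+1)) : ℕ) from rfl] at *
      rw [ih]
      exact hUb i
  have hUinner : ∀ x y : EuclideanSpace ℂ (Fin (N + 1)), ⟪U x, U y⟫ = ⟪x, y⟫ := fun x y => Uiso.inner_map_map x y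
  obtain ⟨m, α, lam, hα, hlam, hmom⟩ := unitary_moment U hUinner (b 0)
  refine ⟨m, α, lam, hα, hlam, ?_⟩
  ext k j
  have h1 : T k j = ⟪(U ^ (k : ℕ)) (b 0), (U ^ (j : ℕ)) (b 0)⟫ := by
    rw [hpow k, hpow j, hGram]
  rw [h1, hmom]
  simp [Tmat, Matrix.sum_apply]
end

section
/- (Gurvits separation theorem) Every positive semidefinite block Toeplitz matrix T = [τ_{k−j}]_{k,j=0}^{n−1} with entries τ_ℓ ∈ M_p(ℂ) is separable: there exist λ_1,…,λ_m on the unit circle and positive semidefinite matrices b_1,…,b_m ∈ M_p(ℂ) such that T = Σ_j T_n(λ_j) ⊗ b_j. -/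
open Matrix ComplexOrder Kronecker
open scoped MatrixOrder

section Helpers

variable {ι κ : Type*} [Fintype ι] [Fintype κ] [DecidableEq ι] [DecidableEq κ]

noncomputable def comb (f : κ → EuclideanSpace ℂ ι) : EuclideanSpace ℂ κ →ₗ[ℂ] EuclideanSpace ℂ ι :=
  ∑ x, LinearMap.smulRight (EuclideanSpace.projₗ (𝕜 := ℂ) x) (f x)

lemma comb_apply (f : κ → EuclideanSpace ℂ ι) (v : EuclideanSpace ℂ κ) :
    comb f v = ∑ x, v x • f x := by
  simp only [comb, LinearMap.sum_apply, LinearMap.smulRight_apply]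
  rfl

lemma comb_single (f : κ → EuclideanSpace ℂ ι) (x : κ) :
    comb f (EuclideanSpace.single x 1) = f x := by
  rw [comb_apply, Finset.sum_eq_single x]
  · simp
  · intro y _ hy; simp [EuclideanSpace.single_apply, hy]
  · simp

lemma comb_inner (f g : κ → EuclideanSpace ℂ ι)
    (h : ∀ x y, inner ℂ (f x) (f y) = inner ℂ (g x) (g y)) (v w : EuclideanSpace ℂ κ) :
    inner ℂ (comb f v) (comb f w) = inner ℂ (comb g v) (comb g w) := by
  rw [comb_apply, comb_apply, comb_apply, comb_apply, sum_inner, sum_inner]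
  refine Finset.sum_congr rfl fun x _ => ?_
  rw [inner_sum, inner_sum]
  refine Finset.sum_congr rfl fun y _ => ?_
  rw [inner_smul_left, inner_smul_left, inner_smul_right, inner_smul_right, h]

lemma exists_isometry_of_gram (f g : κ → EuclideanSpace ℂ ι)
    (h : ∀ x y, inner ℂ (f x) (f y) = inner ℂ (g x) (g y)) :
    ∃ U : EuclideanSpace ℂ ι →ₗᵢ[ℂ] EuclideanSpace ℂ ι, ∀ x, U (f x) = g x := by
  set φ := comb f
  set ψ := comb g
  have hker : LinearMap.ker φ ≤ LinearMap.ker ψ := by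
    intro v hv
    rw [LinearMap.mem_ker] at hv ⊢
    have h2 := comb_inner f g h v v
    rw [hv, inner_zero_left] at h2
    exact inner_self_eq_zero.mp h2.symm
  set L' : (EuclideanSpace ℂ κ ⧸ LinearMap.ker φ) →ₗ[ℂ] EuclideanSpace ℂ ι :=
    (LinearMap.ker φ).liftQ ψ hker with hL'
  set e := φ.quotKerEquivRange
  set L : LinearMap.range φ →ₗ[ℂ] EuclideanSpace ℂ ι := L'.comp e.symm.toLinearMap with hL
  have key : ∀ v : EuclideanSpace ℂ κ, L ⟨φ v, LinearMap.mem_range_self φ v⟩ = ψ v := by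
    intro v
    have he : e (Submodule.Quotient.mk v) = ⟨φ v, LinearMap.mem_range_self φ v⟩ := by
      rfl
    have h3 := congrArg e.symm he
    rw [LinearEquiv.symm_apply_apply] at h3
    rw [hL, LinearMap.comp_apply]
    show L' (e.symm ⟨φ v, LinearMap.mem_range_self φ v⟩) = ψ v
    rw [← h3]
    rfl
  have hnorm : ∀ s : LinearMap.range φ, ‖L s‖ = ‖s‖ := by
    rintro ⟨s, v, rfl⟩
    rw [key]
    have h2 := comb_inner f g h v v
    show ‖ψ v‖ = ‖φ v‖
    rw [@norm_eq_sqrt_re_inner ℂ, @norm_eq_sqrt_re_inner ℂ, h2]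
  refine ⟨(⟨L, hnorm⟩ : LinearMap.range φ →ₗᵢ[ℂ] EuclideanSpace ℂ ι).extend, fun x => ?_⟩
  have hf : f x = φ (EuclideanSpace.single x 1) := (comb_single f x).symm
  have hg : g x = ψ (EuclideanSpace.single x 1) := (comb_single g x).symm
  rw [hf, hg]
  have hmem : φ (EuclideanSpace.single x 1) ∈ LinearMap.range φ :=
    LinearMap.mem_range_self _ _
  have := LinearIsometry.extend_apply (⟨L, hnorm⟩ : LinearMap.range φ →ₗᵢ[ℂ] EuclideanSpace ℂ ι)
    ⟨φ (EuclideanSpace.single x 1), hmem⟩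
  rw [this]
  exact key _

lemma euclid_inner_eq (u v : ι → ℂ) :
    inner ℂ ((WithLp.equiv 2 (ι → ℂ)).symm u) ((WithLp.equiv 2 (ι → ℂ)).symm v)
      = star u ⬝ᵥ v := by
  simp [PiLp.inner_apply, RCLike.inner_apply, dotProduct]
  exact Finset.sum_congr rfl fun _ _ => mul_comm _ _

lemma exists_unitary_of_gram (f g : κ → (ι → ℂ))
    (h : ∀ x y, star (f x) ⬝ᵥ f y = star (g x) ⬝ᵥ g y) :
    ∃ M : Matrix ι ι ℂ, Mᴴ * M = 1 ∧ ∀ x, M *ᵥ f x = g x := by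
  obtain ⟨U, hU⟩ := exists_isometry_of_gram
    (fun x => (WithLp.equiv 2 (ι → ℂ)).symm (f x)) (fun x => (WithLp.equiv 2 (ι → ℂ)).symm (g x))
    (fun x y => by rw [euclid_inner_eq, euclid_inner_eq, h])
  set M : Matrix ι ι ℂ :=
    Matrix.of fun i j => U ((WithLp.equiv 2 (ι → ℂ)).symm (Pi.single j 1)) i with hM
  set eL := WithLp.linearEquiv 2 ℂ (ι → ℂ) with heL
  set L1 : EuclideanSpace ℂ ι →ₗ[ℂ] EuclideanSpace ℂ ι :=
    eL.symm.toLinearMap ∘ₗ M.mulVecLin ∘ₗ eL.toLinearMap with hL1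
  have hb : L1 = U.toLinearMap := by
    refine Module.Basis.ext (EuclideanSpace.basisFun ι ℂ).toBasis (fun j => ?_)
    have hbj : ((EuclideanSpace.basisFun ι ℂ).toBasis j : EuclideanSpace ℂ ι)
        = (WithLp.equiv 2 (ι → ℂ)).symm (Pi.single j 1) := by
      simp [EuclideanSpace.basisFun]
      rfl
    rw [hbj]
    show eL.symm (M *ᵥ (eL ((WithLp.equiv 2 (ι → ℂ)).symm (Pi.single j 1))))
      = U ((WithLp.equiv 2 (ι → ℂ)).symm (Pi.single j 1))
    ext i
    show (M *ᵥ Pi.single j 1) i = U ((WithLp.equiv 2 (ι → ℂ)).symm (Pi.single j 1)) i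
    rw [Matrix.mulVec_single]
    exact mul_one _
  have hmv : ∀ v : EuclideanSpace ℂ ι, M *ᵥ (eL v) = eL (U v) := by
    intro v
    have h1 := LinearMap.congr_fun hb v
    have h2 : L1 v = eL.symm (M *ᵥ (eL v)) := rfl
    rw [h2] at h1
    have := congrArg eL h1
    rwa [LinearEquiv.apply_symm_apply] at this
  have hMg : ∀ x, M *ᵥ f x = g x := by
    intro x
    have := hmv ((WithLp.equiv 2 (ι → ℂ)).symm (f x))
    rw [hU] at this
    exact this
  refine ⟨M, ?_, hMg⟩
  ext x y
  have h2 : (Mᴴ * M) x y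
      = inner ℂ (U ((WithLp.equiv 2 (ι → ℂ)).symm (Pi.single x 1)))
          (U ((WithLp.equiv 2 (ι → ℂ)).symm (Pi.single y 1))) := by
    rw [Matrix.mul_apply, PiLp.inner_apply]
    refine Finset.sum_congr rfl fun i _ => ?_
    rw [Matrix.conjTranspose_apply, RCLike.inner_apply, mul_comm]
    rfl
  rw [h2, LinearIsometry.inner_map_map, euclid_inner_eq]
  simp [dotProduct, Pi.single_apply, Matrix.one_apply, eq_comm]

lemma circle_infinite : Set.Infinite {z : ℂ | ‖z‖ = 1} := by
  apply Set.infinite_of_injective_forall_mem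
    (f := fun k : ℕ => (1 + k * Complex.I) / (1 - k * Complex.I))
  case hi =>
    intro k l hkl
    have hk : (1 : ℂ) - k * Complex.I ≠ 0 := by
      intro h
      have := congrArg Complex.re h
      simp at this
    have hl : (1 : ℂ) - l * Complex.I ≠ 0 := by
      intro h
      have := congrArg Complex.re h
      simp at this
    rw [div_eq_div_iff hk hl] at hkl
    have h2 : (k : ℂ) = l := by
      have hI : Complex.I ≠ 0 := Complex.I_ne_zero
      have h3 : (2 : ℂ) * k * Complex.I = 2 * l * Complex.I := by
        ring_nf at hkl ⊢; linear_combination hkl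
      field_simp at h3
      exact_mod_cast h3
    exact_mod_cast h2
  case hf =>
    intro k
    have h1 : (1 : ℂ) - k * Complex.I = starRingEnd ℂ (1 + k * Complex.I) := by
      simp [map_add, Complex.conj_I]
      ring
    have hne : (1 : ℂ) + k * Complex.I ≠ 0 := by
      intro h
      have := congrArg Complex.re h
      simp at this
    show ‖_‖ = 1
    rw [norm_div, h1, Complex.norm_conj, div_self]
    simpa using hne

lemma exists_good_theta {ι : Type*} [Fintype ι] [DecidableEq ι] (M : Matrix ι ι ℂ) :
    ∃ θ : ℂ, ‖θ‖ = 1 ∧ IsUnit (1 - θ • M).det := by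
  have hfin : (Set.Finite ({z : ℂ | ‖z‖ = 1} ∩ (Inv.inv ⁻¹' spectrum ℂ M))) := by
    refine Set.Finite.subset ((M.finite_spectrum).preimage ?_) Set.inter_subset_right
    intro a _ b _ hab
    rcases eq_or_ne a 0 with rfl | ha
    · simpa [eq_comm, inv_eq_zero] using hab.symm
    · rcases eq_or_ne b 0 with rfl | hb
      · simpa [inv_eq_zero] using hab
      · exact inv_injective hab
  obtain ⟨θ, hθ⟩ := (circle_infinite.diff hfin).nonempty
  have hθ1 : ‖θ‖ = 1 := hθ.1
  have hθ0 : θ ≠ 0 := by intro h; rw [h] at hθ1; simp at hθ1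
  refine ⟨θ, hθ1, ?_⟩
  have hnotspec : θ⁻¹ ∉ spectrum ℂ M := by
    intro h
    exact hθ.2 ⟨hθ.1, h⟩
  rw [spectrum.mem_iff, not_not] at hnotspec
  have halg : (algebraMap ℂ (Matrix ι ι ℂ)) θ⁻¹ - M = θ⁻¹ • (1 : Matrix ι ι ℂ) - M := by
    rw [Algebra.algebraMap_eq_smul_one]
  rw [halg] at hnotspec
  have hfac : (1 : Matrix ι ι ℂ) - θ • M = θ • (θ⁻¹ • (1 : Matrix ι ι ℂ) - M) := by
    rw [smul_sub, smul_smul, mul_inv_cancel₀ hθ0, one_smul]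
  rw [hfac, det_smul]
  exact (IsUnit.pow _ (Ne.isUnit hθ0)).mul ((isUnit_iff_isUnit_det _).mp hnotspec)

lemma unitary_diag {ι : Type*} [Fintype ι] [DecidableEq ι] (M : Matrix ι ι ℂ)
    (hM : Mᴴ * M = 1) :
    ∃ (V : Matrix ι ι ℂ) (μ : ι → ℂ), Vᴴ * V = 1 ∧ (∀ i, ‖μ i‖ = 1) ∧
      M = V * diagonal μ * Vᴴ := by
  obtain ⟨θ, hθ1, hθdet⟩ := exists_good_theta M
  have hθ0 : θ ≠ 0 := by intro h; rw [h] at hθ1; simp at hθ1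
  set W : Matrix ι ι ℂ := θ • M with hW
  have hW1 : Wᴴ * W = 1 := by
    rw [hW, conjTranspose_smul, Matrix.smul_mul, Matrix.mul_smul, hM, smul_smul]
    have hc : star θ * θ = 1 := by
      have h1 : star θ * θ = ((Complex.normSq θ : ℝ) : ℂ) := by
        show starRingEnd ℂ θ * θ = _
        rw [← Complex.normSq_eq_conj_mul_self]
      rw [h1, Complex.normSq_eq_norm_sq, hθ1]
      norm_num
    rw [hc, one_smul]
  have hW2 : W * Wᴴ = 1 := mul_eq_one_comm.mp hW1
  have hdet : IsUnit (1 - W).det := hθdet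
  have hdetH : IsUnit (1 - Wᴴ).det := by
    have : (1 : Matrix ι ι ℂ) - Wᴴ = (1 - W)ᴴ := by simp
    rw [this, det_conjTranspose]
    exact hdet.star
  -- A is skew-hermitian
  set A : Matrix ι ι ℂ := (1 + W) * (1 - W)⁻¹ with hA
  have e1 : (1 + Wᴴ) * (1 - W) = Wᴴ - W := by
    rw [Matrix.mul_sub, Matrix.add_mul, Matrix.add_mul, hW1]
    simp only [Matrix.one_mul, Matrix.mul_one]
    abel
  have e2 : (1 - Wᴴ) * (1 + W) = W - Wᴴ := by
    rw [Matrix.mul_add, Matrix.sub_mul, Matrix.sub_mul, hW1]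
    simp only [Matrix.one_mul, Matrix.mul_one]
    abel
  have hAskew : Aᴴ = -A := by
    have h3 : Aᴴ = (1 - Wᴴ)⁻¹ * (1 + Wᴴ) := by
      rw [hA, conjTranspose_mul, conjTranspose_nonsing_inv]
      simp
    have h4 : (1 + Wᴴ) = (1 - Wᴴ) * (-A) := by
      rw [hA, Matrix.mul_neg, ← Matrix.mul_assoc, e2]
      rw [← Matrix.neg_mul, neg_sub, ← e1, Matrix.mul_assoc,
        Matrix.mul_nonsing_inv _ hdet, Matrix.mul_one]
    rw [h3, h4, ← Matrix.mul_assoc, Matrix.nonsing_inv_mul _ hdetH, Matrix.one_mul]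
  set H : Matrix ι ι ℂ := Complex.I • A with hH
  have hHherm : H.IsHermitian := by
    show Hᴴ = H
    rw [hH, conjTranspose_smul, hAskew]
    simp [Complex.conj_I]
  -- spectral theorem for H
  set V : Matrix ι ι ℂ := (hHherm.eigenvectorUnitary : Matrix ι ι ℂ) with hVdef
  have hV1 : Vᴴ * V = 1 := hHherm.eigenvectorUnitary.2.1
  have hV2 : V * Vᴴ = 1 := mul_eq_one_comm.mp hV1
  set d : ι → ℂ := RCLike.ofReal ∘ hHherm.eigenvalues with hd
  have hspec : H = V * diagonal d * Vᴴ := hHherm.spectral_theorem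
  have hIone : ∀ c : ℂ, c • (1 : Matrix ι ι ℂ) = diagonal (fun _ => c) := by
    intro c
    ext i j
    by_cases h : i = j <;> simp [h, Matrix.one_apply]
  have mulconj : ∀ u v : ι → ℂ,
      (V * diagonal u * Vᴴ) * (V * diagonal v * Vᴴ) = V * diagonal (fun k => u k * v k) * Vᴴ := by
    intro u v
    simp only [Matrix.mul_assoc]
    rw [← Matrix.mul_assoc Vᴴ V, hV1, Matrix.one_mul, ← Matrix.mul_assoc (diagonal u),
      Matrix.diagonal_mul_diagonal]
  have addconj : ∀ u v : ι → ℂ,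
      (V * diagonal u * Vᴴ) + (V * diagonal v * Vᴴ) = V * diagonal (fun k => u k + v k) * Vᴴ := by
    intro u v
    rw [← Matrix.add_mul, ← Matrix.mul_add, Matrix.diagonal_add]
  have smulconj : ∀ (c : ℂ) (u : ι → ℂ),
      c • (V * diagonal u * Vᴴ) = V * diagonal (fun k => c * u k) * Vᴴ := by
    intro c u
    have h1 : c • (V * diagonal u * Vᴴ) = V * (c • diagonal u) * Vᴴ := by
      rw [Matrix.mul_smul, Matrix.smul_mul]
    rw [h1]
    congr 2
    ext i j
    by_cases h : i = j <;> simp [h]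
  have honec : ∀ c : ℂ, c • (1 : Matrix ι ι ℂ) = V * diagonal (fun _ => c) * Vᴴ := by
    intro c
    calc c • (1 : Matrix ι ι ℂ) = c • (V * diagonal (fun _ => (1:ℂ)) * Vᴴ) := by
          rw [show (diagonal (fun _ : ι => (1:ℂ))) = 1 from by
              ext i j; by_cases h : i = j <;> simp [h, Matrix.one_apply]]
          rw [Matrix.mul_one, hV2]
      _ = V * diagonal (fun _ => c) * Vᴴ := by rw [smulconj]; simp
  have hconj : ∀ c : ℂ, H + c • 1 = V * diagonal (fun k => d k + c) * Vᴴ := by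
    intro c
    rw [hspec, honec c, addconj]
  have hHrel : H * (1 - W) = Complex.I • (1 + W) := by
    rw [hH, hA, Matrix.smul_mul, Matrix.mul_assoc, Matrix.nonsing_inv_mul _ hdet,
      Matrix.mul_one]
  have hrel2 : H - Complex.I • (1 : Matrix ι ι ℂ) = (H + Complex.I • 1) * W := by
    rw [Matrix.add_mul]
    have h5 : (Complex.I • (1 : Matrix ι ι ℂ)) * W = Complex.I • W := by
      rw [Matrix.smul_mul, Matrix.one_mul]
    rw [h5]
    have h6 := hHrel
    rw [Matrix.mul_sub, Matrix.mul_one, smul_add] at h6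
    have h7 := sub_eq_iff_eq_add.mp h6
    conv_lhs => rw [h7]
    abel
  set g : ι → ℂ := fun k => d k + Complex.I with hgdef
  have hg0 : ∀ k, g k ≠ 0 := by
    intro k h
    have := congrArg Complex.im h
    simp [hgdef, hd] at this
  set R : Matrix ι ι ℂ := V * diagonal (fun k => (g k)⁻¹) * Vᴴ with hRdef
  have hR1 : R * (H + Complex.I • 1) = 1 := by
    rw [hRdef, hconj Complex.I, mulconj]
    have hone : (fun k => (g k)⁻¹ * (d k + Complex.I)) = fun _ : ι => (1:ℂ) := by
      funext k; exact inv_mul_cancel₀ (hg0 k)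
    rw [hone, show (diagonal (fun _ : ι => (1:ℂ))) = 1 from by
        ext i j; by_cases h : i = j <;> simp [h, Matrix.one_apply]]
    rw [Matrix.mul_one, hV2]
  have hminus : H - Complex.I • (1 : Matrix ι ι ℂ)
      = V * diagonal (fun k => d k - Complex.I) * Vᴴ := by
    simp only [sub_eq_add_neg, ← neg_smul]
    exact hconj (-Complex.I)
  have hWdiag : W = V * diagonal (fun k => (g k)⁻¹ * (d k - Complex.I)) * Vᴴ := by
    have hWeq : W = R * (H - Complex.I • 1) := by
      rw [hrel2, ← Matrix.mul_assoc, hR1, Matrix.one_mul]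
    rw [hWeq, hminus, hRdef, mulconj]
  refine ⟨V, fun k => θ⁻¹ * ((g k)⁻¹ * (d k - Complex.I)), hV1, ?_, ?_⟩
  · intro k
    have hdreal : starRingEnd ℂ (d k) = d k := by
      simp [hd, Complex.conj_ofReal]
    have hc : g k = starRingEnd ℂ (d k - Complex.I) := by
      rw [map_sub, Complex.conj_I, hdreal, sub_neg_eq_add]
    have habs1 : ‖d k - Complex.I‖ = ‖g k‖ := by
      rw [hc, Complex.norm_conj]
    rw [norm_mul, norm_mul, norm_inv, norm_inv, hθ1, habs1, inv_one, one_mul,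
      inv_mul_cancel₀ (norm_ne_zero_iff.mpr (hg0 k))]
  · have hMW : M = θ⁻¹ • W := by
      rw [hW, smul_smul, inv_mul_cancel₀ hθ0, one_smul]
    rw [hMW, hWdiag, smulconj]

-- conjugation helpers (standalone)
lemma conj_mul_diag {ι : Type*} [Fintype ι] [DecidableEq ι] {V : Matrix ι ι ℂ}
    (hV1 : Vᴴ * V = 1) (u v : ι → ℂ) :
    (V * diagonal u * Vᴴ) * (V * diagonal v * Vᴴ) = V * diagonal (fun k => u k * v k) * Vᴴ := by
  simp only [Matrix.mul_assoc]
  rw [← Matrix.mul_assoc Vᴴ V, hV1, Matrix.one_mul, ← Matrix.mul_assoc (diagonal u),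
    Matrix.diagonal_mul_diagonal]

lemma conj_pow_diag {ι : Type*} [Fintype ι] [DecidableEq ι] {V : Matrix ι ι ℂ}
    (hV1 : Vᴴ * V = 1) (v : ι → ℂ) (k : ℕ) :
    (V * diagonal v * Vᴴ) ^ k = V * diagonal (fun i => v i ^ k) * Vᴴ := by
  induction k with
  | zero =>
    simp only [pow_zero]
    have h1 : (diagonal fun _ : ι => (1:ℂ)) = 1 := by
      ext i j; by_cases h : i = j <;> simp [h, Matrix.one_apply]
    rw [h1, Matrix.mul_one, mul_eq_one_comm.mp hV1]
  | succ k ih =>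
    rw [pow_succ, ih, conj_mul_diag hV1]
    congr 2

end Helpers

/-- **Gurvits' separation theorem**: every positive semidefinite block Toeplitz matrix
with matrix entries is separable. -/
theorem stmt7 (n p : ℕ) (τ : ℤ → Matrix (Fin p) (Fin p) ℂ)
    (T : Matrix (Fin n × Fin p) (Fin n × Fin p) ℂ)
    (hT : ∀ (k j : Fin n) (a b : Fin p), T (k, a) (j, b) = τ ((k : ℤ) - (j : ℤ)) a b)
    (hpos : T.PosSemidef) :
    ∃ (m : ℕ) (lam : Fin m → ℂ) (b : Fin m → Matrix (Fin p) (Fin p) ℂ),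
      (∀ j, ‖lam j‖ = 1) ∧ (∀ j, (b j).PosSemidef) ∧
      T = ∑ j, Tmat n (lam j) ⊗ₖ b j := by
  classical
  rcases n with _ | n'
  · refine ⟨0, Fin.elim0, Fin.elim0, fun j => j.elim0, fun j => j.elim0, ?_⟩
    ext ⟨k, a⟩ ⟨j, b⟩
    exact k.elim0
  obtain ⟨F, hF⟩ := CStarAlgebra.nonneg_iff_eq_star_mul_self.mp hpos.nonneg
  set f : Fin (n'+1) × Fin p → (Fin (n'+1) × Fin p → ℂ) := fun x i => F i x with hfdef
  have hGram : ∀ x y, star (f x) ⬝ᵥ f y = T x y := by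
    intro x y
    rw [hF, Matrix.mul_apply]
    simp [dotProduct, Matrix.conjTranspose_apply, hfdef]
  have hshift : ∀ q r : Fin n' × Fin p,
      star (f (q.1.castSucc, q.2)) ⬝ᵥ f (r.1.castSucc, r.2)
        = star (f (q.1.succ, q.2)) ⬝ᵥ f (r.1.succ, r.2) := by
    intro q r
    rw [hGram, hGram, hT, hT]
    have hcast : ((q.1.castSucc : ℕ) : ℤ) - ((r.1.castSucc : ℕ) : ℤ)
        = ((q.1.succ : ℕ) : ℤ) - ((r.1.succ : ℕ) : ℤ) := by
      simp only [Fin.coe_castSucc, Fin.val_succ]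
      push_cast
      ring
    rw [hcast]
  obtain ⟨M, hM1, hMf⟩ := exists_unitary_of_gram
    (fun q : Fin n' × Fin p => f (q.1.castSucc, q.2))
    (fun q : Fin n' × Fin p => f (q.1.succ, q.2)) hshift
  have hpow : ∀ (k : Fin (n'+1)) (a : Fin p), f (k, a) = (M ^ (k : ℕ)) *ᵥ f (0, a) := by
    intro k a
    induction k using Fin.induction with
    | zero => simp
    | succ i ih =>
      have h2 : M ^ ((i : ℕ)) *ᵥ f (0, a) = f (i.castSucc, a) := by
        rw [ih, Fin.coe_castSucc]
      rw [Fin.val_succ, pow_succ', ← Matrix.mulVec_mulVec, h2]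
      exact (hMf (i, a)).symm
  obtain ⟨V, μ, hV1, hμabs, hMdiag⟩ := unitary_diag M hM1
  have hV2 : V * Vᴴ = 1 := mul_eq_one_comm.mp hV1
  set u : (Fin (n'+1) × Fin p) → Fin p → ℂ := fun i a => (Vᴴ *ᵥ f (0, a)) i with hudef
  set lam0 : (Fin (n'+1) × Fin p) → ℂ := fun i => star (μ i) with hlam0
  set b0 : (Fin (n'+1) × Fin p) → Matrix (Fin p) (Fin p) ℂ :=
    fun i => Matrix.of fun a b => star (u i a) * u i b with hb0
  have hμ0 : ∀ i, μ i ≠ 0 := by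
    intro i h
    have := hμabs i
    rw [h] at this
    simp at this
  have hlamabs : ∀ i, ‖lam0 i‖ = 1 := by
    intro i
    have : ‖lam0 i‖ = ‖μ i‖ := by
      rw [hlam0]
      exact Complex.norm_conj (μ i)
    rw [this, hμabs]
  have hlam0ne : ∀ i, lam0 i ≠ 0 := by
    intro i h
    have := hlamabs i
    rw [h] at this
    simp at this
  have hμlam : ∀ i, μ i = (lam0 i)⁻¹ := by
    intro i
    have h1 : lam0 i * μ i = 1 := by
      rw [hlam0]
      have h2 : star (μ i) * μ i = ((Complex.normSq (μ i) : ℝ) : ℂ) := by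
        show starRingEnd ℂ (μ i) * μ i = _
        rw [← Complex.normSq_eq_conj_mul_self]
      rw [h2, Complex.normSq_eq_norm_sq, hμabs]
      norm_num
    exact eq_inv_of_mul_eq_one_right h1
  have hentry : ∀ (k j : Fin (n'+1)) (a b : Fin p),
      T (k, a) (j, b) = ∑ i, lam0 i ^ ((k : ℤ) - (j : ℤ)) * (star (u i a) * u i b) := by
    intro k j a b
    rw [← hGram, hpow k a, hpow j b]
    have hstep1 : star (M ^ (k:ℕ) *ᵥ f (0,a)) ⬝ᵥ (M ^ (j:ℕ) *ᵥ f (0,b))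
        = star (f (0,a)) ⬝ᵥ (((M ^ (k:ℕ))ᴴ * M ^ (j:ℕ)) *ᵥ f (0,b)) := by
      rw [star_mulVec, ← Matrix.mulVec_mulVec]
      simp only [Matrix.dotProduct_mulVec]
    rw [hstep1]
    have hMH : Mᴴ = V * diagonal (star μ) * Vᴴ := by
      rw [hMdiag, conjTranspose_mul, conjTranspose_mul, conjTranspose_conjTranspose,
        diagonal_conjTranspose, Matrix.mul_assoc]
    have hMpow : (M ^ (k:ℕ))ᴴ * M ^ (j:ℕ)
        = V * diagonal (fun i => star (μ i) ^ (k:ℕ) * μ i ^ (j:ℕ)) * Vᴴ := by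
      rw [conjTranspose_pow, hMH, hMdiag, conj_pow_diag hV1, conj_pow_diag hV1,
        conj_mul_diag hV1]
      congr 2
    rw [hMpow]
    have hquad : star (f (0,a)) ⬝ᵥ ((V * diagonal (fun i => star (μ i) ^ (k:ℕ) * μ i ^ (j:ℕ)) * Vᴴ) *ᵥ f (0,b))
        = ∑ i, star (u i a) * ((star (μ i) ^ (k:ℕ) * μ i ^ (j:ℕ)) * u i b) := by
      rw [← Matrix.mulVec_mulVec, ← Matrix.mulVec_mulVec, dotProduct_mulVec]
      have hrow : star (f (0,a)) ᵥ* V = fun i => star (u i a) := by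
        funext i
        have := congrFun (star_mulVec Vᴴ (f (0,a))) i
        rw [conjTranspose_conjTranspose] at this
        rw [← this]
        rfl
      rw [hrow]
      rw [dotProduct]
      refine Finset.sum_congr rfl fun i _ => ?_
      rw [show ((diagonal (fun i => star (μ i) ^ (k:ℕ) * μ i ^ (j:ℕ)) *ᵥ (Vᴴ *ᵥ f (0,b))) i)
          = (star (μ i) ^ (k:ℕ) * μ i ^ (j:ℕ)) * (Vᴴ *ᵥ f (0,b)) i from
        Matrix.mulVec_diagonal _ _ _]
    rw [hquad]
    refine Finset.sum_congr rfl fun i _ => ?_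
    have hcoef : star (μ i) ^ (k:ℕ) * μ i ^ (j:ℕ) = lam0 i ^ ((k : ℤ) - (j : ℤ)) := by
      rw [sub_eq_add_neg, zpow_add₀ (hlam0ne i), zpow_natCast, _root_.zpow_neg, zpow_natCast,
        ← inv_pow, ← hμlam i]
    rw [← hcoef]
    ring
  have hb0psd : ∀ i, (b0 i).PosSemidef := by
    intro i
    have hrw : b0 i = (Matrix.replicateRow (Fin 1) (u i))ᴴ * Matrix.replicateRow (Fin 1) (u i) := by
      ext a b
      simp [Matrix.mul_apply, Matrix.conjTranspose_apply, Matrix.replicateRow_apply, hb0]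
    rw [hrw]
    exact posSemidef_conjTranspose_mul_self _
  refine ⟨Fintype.card (Fin (n'+1) × Fin p),
    fun j => lam0 ((Fintype.equivFin _).symm j), fun j => b0 ((Fintype.equivFin _).symm j),
    fun j => hlamabs _, fun j => hb0psd _, ?_⟩
  rw [Equiv.sum_comp ((Fintype.equivFin (Fin (n'+1) × Fin p)).symm)
    (fun i => Tmat (n'+1) (lam0 i) ⊗ₖ b0 i)]
  ext ⟨k, a⟩ ⟨j, b⟩
  rw [hentry k j a b, Matrix.sum_apply]
  refine Finset.sum_congr rfl fun i _ => ?_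
  rw [kroneckerMap_apply]
  rfl
end

section
/- (Factorisation theorem, matrix case) If T = [τ_{k−j}]_{k,j=0}^{n−1} with τ_ℓ ∈ M_p(ℂ) is a positive semidefinite block Toeplitz matrix, then there exist q ∈ ℕ, a unitary u ∈ M_q(ℂ), and a linear map w : ℂ^p → ℂ^q such that τ_ℓ = w* u^ℓ w for all ℓ with |ℓ| ≤ n−1, i.e., T = (1_n ⊗ w)* T_n(u) (1_n ⊗ w). -/
open Matrix ComplexOrder Kronecker

/-- Integer powers of a matrix `u`, where `u ^ (-m)` means `(u*)^m`. -/
noncomputable def upow {q : ℕ} (u : Matrix (Fin q) (Fin q) ℂ) (m : ℤ) :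
    Matrix (Fin q) (Fin q) ℂ :=
  if 0 ≤ m then u ^ m.toNat else uᴴ ^ (-m).toNat

section Helpers

variable {ι κ : Type*} [Fintype ι] [DecidableEq ι] [Fintype κ] [DecidableEq κ]

private lemma toEuclideanLin_mul' {μ : Type*} [Fintype μ] [DecidableEq μ]
    (M : Matrix ι μ ℂ) (N : Matrix μ κ ℂ) :
    Matrix.toEuclideanLin (M * N) =
      (Matrix.toEuclideanLin M).comp (Matrix.toEuclideanLin N) := by
  apply LinearMap.ext; intro x
  simp [Matrix.toEuclideanLin_apply, Matrix.mulVec_mulVec]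

private lemma toEuclideanLin_one' : Matrix.toEuclideanLin (1 : Matrix ι ι ℂ) = LinearMap.id := by
  apply LinearMap.ext; intro x
  simp [Matrix.toEuclideanLin_apply]

/-- If `Aᴴ A = Bᴴ B` then `B = u A` for some unitary `u`. -/
lemma exists_unitary_mul_eq (A B : Matrix ι κ ℂ) (h : Aᴴ * A = Bᴴ * B) :
    ∃ u : Matrix ι ι ℂ, u ∈ Matrix.unitaryGroup ι ℂ ∧ u * A = B := by
  classical
  set fA := Matrix.toEuclideanLin A with hfA
  set fB := Matrix.toEuclideanLin B with hfB
  have hinner : ∀ x y, (inner ℂ (fA x) (fA y) : ℂ) = inner ℂ (fB x) (fB y) := by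
    intro x y
    have h1 : (inner ℂ (fA x) (fA y) : ℂ) = inner ℂ x ((Matrix.toEuclideanLin (Aᴴ * A)) y) := by
      rw [toEuclideanLin_mul', LinearMap.comp_apply,
        Matrix.toEuclideanLin_conjTranspose_eq_adjoint, LinearMap.adjoint_inner_right]
    have h2 : (inner ℂ (fB x) (fB y) : ℂ) = inner ℂ x ((Matrix.toEuclideanLin (Bᴴ * B)) y) := by
      rw [toEuclideanLin_mul', LinearMap.comp_apply,
        Matrix.toEuclideanLin_conjTranspose_eq_adjoint, LinearMap.adjoint_inner_right]
    rw [h1, h2, h]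
  have hnorm : ∀ x, ‖fA x‖ = ‖fB x‖ := by
    intro x
    rw [@norm_eq_sqrt_re_inner ℂ, @norm_eq_sqrt_re_inner ℂ, hinner]
  have hker : LinearMap.ker fA ≤ LinearMap.ker fB := by
    intro x hx
    rw [LinearMap.mem_ker] at hx ⊢
    rw [← norm_eq_zero, ← hnorm, hx, norm_zero]
  -- the isometry from range fA
  set g : LinearMap.range fA →ₗ[ℂ] EuclideanSpace ℂ ι :=
    ((LinearMap.ker fA).liftQ fB hker).comp
      (LinearMap.quotKerEquivRange fA).symm.toLinearMap with hg
  have hgapp : ∀ x, g ⟨fA x, LinearMap.mem_range_self fA x⟩ = fB x := by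
    intro x
    rw [hg, LinearMap.comp_apply, LinearEquiv.coe_toLinearMap,
      LinearMap.quotKerEquivRange_symm_apply_image, Submodule.mkQ_apply,
      Submodule.liftQ_apply]
  have hgnorm : ∀ v : LinearMap.range fA, ‖g v‖ = ‖(v : EuclideanSpace ℂ ι)‖ := by
    rintro ⟨v, hv⟩
    obtain ⟨x, rfl⟩ := hv
    rw [hgapp x, ← hnorm]
  set L : LinearMap.range fA →ₗᵢ[ℂ] EuclideanSpace ℂ ι := ⟨g, hgnorm⟩ with hL
  set φ := L.extend with hφ
  set u : Matrix ι ι ℂ := Matrix.toEuclideanLin.symm φ.toLinearMap with hu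
  have huφ : Matrix.toEuclideanLin u = φ.toLinearMap := by
    rw [hu, LinearEquiv.apply_symm_apply]
  have hadj : (Matrix.toEuclideanLin uᴴ).comp (Matrix.toEuclideanLin u) = LinearMap.id := by
    rw [Matrix.toEuclideanLin_conjTranspose_eq_adjoint, huφ]
    apply LinearMap.ext; intro x
    apply ext_inner_right ℂ
    intro y
    rw [LinearMap.comp_apply, LinearMap.adjoint_inner_left, LinearMap.id_apply]
    exact φ.inner_map_map x y
  have hmul : uᴴ * u = 1 := by
    apply Matrix.toEuclideanLin.injective
    rw [toEuclideanLin_mul', hadj, toEuclideanLin_one']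
  refine ⟨u, Matrix.mem_unitaryGroup_iff'.2 hmul, ?_⟩
  apply Matrix.toEuclideanLin.injective
  rw [toEuclideanLin_mul', huφ]
  apply LinearMap.ext; intro x
  rw [LinearMap.comp_apply]
  exact (L.extend_apply ⟨fA x, LinearMap.mem_range_self fA x⟩).trans (hgapp x)

set_option maxHeartbeats 1000000

end Helpers

set_option maxHeartbeats 1000000

/-- **Factorisation theorem** (matrix case): a positive semidefinite block Toeplitz matrix
`T = [τ_{k-j}]` with `τ_ℓ ∈ M_p(ℂ)` satisfies `τ_ℓ = w* u^ℓ w` for a unitary `u ∈ M_q(ℂ)`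
and a linear map `w : ℂ^p → ℂ^q`, i.e. `T = (1_n ⊗ w)* T_n(u) (1_n ⊗ w)`. -/
theorem stmt15 (n p : ℕ) (τ : ℤ → Matrix (Fin p) (Fin p) ℂ)
    (T : Matrix (Fin n × Fin p) (Fin n × Fin p) ℂ)
    (hT : ∀ (k j : Fin n) (a b : Fin p), T (k, a) (j, b) = τ ((k : ℤ) - (j : ℤ)) a b)
    (hpos : T.PosSemidef) :
    ∃ (q : ℕ) (u : Matrix (Fin q) (Fin q) ℂ) (w : Matrix (Fin q) (Fin p) ℂ),
      u ∈ Matrix.unitaryGroup (Fin q) ℂ ∧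
      (∀ ℓ : ℤ, |ℓ| ≤ (n : ℤ) - 1 → τ ℓ = wᴴ * upow u ℓ * w) ∧
      ∀ (k j : Fin n) (a b : Fin p),
        T (k, a) (j, b) = (wᴴ * upow u ((k : ℤ) - (j : ℤ)) * w) a b := by
  classical
  rcases Nat.eq_zero_or_pos n with hn | hn
  · subst hn
    refine ⟨0, 1, 0, one_mem _, ?_, ?_⟩
    · intro ℓ hℓ
      have h1 : (0:ℤ) ≤ |ℓ| := abs_nonneg ℓ
      omega
    · intro k; exact k.elim0
  obtain ⟨S, hS2⟩ : ∃ S : Matrix (Fin n × Fin p) (Fin n × Fin p) ℂ, Sᴴ * S = T :=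
    by
      open scoped MatrixOrder in
      obtain ⟨B, hB⟩ := CStarAlgebra.nonneg_iff_eq_star_mul_self.mp hpos.nonneg
      exact ⟨B, hB.symm⟩
  -- inner products of columns of S
  have hcol : ∀ (k j : Fin n) (a b : Fin p),
      (∑ i, star (S i (k, a)) * S i (j, b)) = τ ((k : ℤ) - (j : ℤ)) a b := by
    intro k j a b
    calc (∑ i, star (S i (k, a)) * S i (j, b)) = (Sᴴ * S) (k, a) (j, b) := by
          simp [Matrix.mul_apply, Matrix.conjTranspose_apply]
      _ = T (k, a) (j, b) := by rw [hS2]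
      _ = τ ((k : ℤ) - (j : ℤ)) a b := hT k j a b
  -- block columns of S
  set E : Fin n → Matrix (Fin n × Fin p) (Fin p) ℂ :=
    fun k => Matrix.of (fun i a => S i (k, a)) with hE
  have hgram : ∀ k j : Fin n, (E k)ᴴ * E j = τ ((k : ℤ) - (j : ℤ)) := by
    intro k j
    ext a b
    calc ((E k)ᴴ * E j) a b = ∑ i, star (S i (k, a)) * S i (j, b) := by
          simp [Matrix.mul_apply, Matrix.conjTranspose_apply, hE]
      _ = τ ((k : ℤ) - (j : ℤ)) a b := hcol k j a b
  set A : Matrix (Fin n × Fin p) (Fin (n-1) × Fin p) ℂ :=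
    Matrix.of (fun i kc => S i (⟨kc.1.1 + 1, by have := kc.1.2; omega⟩, kc.2)) with hA
  set B : Matrix (Fin n × Fin p) (Fin (n-1) × Fin p) ℂ :=
    Matrix.of (fun i kc => S i (⟨kc.1.1, by have := kc.1.2; omega⟩, kc.2)) with hB
  have hAB : Aᴴ * A = Bᴴ * B := by
    ext kc jc
    obtain ⟨⟨k, hk⟩, a⟩ := kc
    obtain ⟨⟨j, hj⟩, b⟩ := jc
    have h1 : (Aᴴ * A) (⟨k, hk⟩, a) (⟨j, hj⟩, b)
        = τ (((k:ℤ) + 1) - ((j:ℤ) + 1)) a b := by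
      calc (Aᴴ * A) (⟨k, hk⟩, a) (⟨j, hj⟩, b)
          = ∑ i, star (S i (⟨k + 1, by omega⟩, a)) * S i (⟨j + 1, by omega⟩, b) := by
            simp [Matrix.mul_apply, Matrix.conjTranspose_apply, hA]
        _ = τ ((((⟨k + 1, by omega⟩ : Fin n)) : ℤ) - (((⟨j + 1, by omega⟩ : Fin n)) : ℤ)) a b :=
            hcol _ _ a b
        _ = τ (((k:ℤ) + 1) - ((j:ℤ) + 1)) a b := by norm_num
    have h2 : (Bᴴ * B) (⟨k, hk⟩, a) (⟨j, hj⟩, b) = τ ((k:ℤ) - (j:ℤ)) a b := by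
      calc (Bᴴ * B) (⟨k, hk⟩, a) (⟨j, hj⟩, b)
          = ∑ i, star (S i (⟨k, by omega⟩, a)) * S i (⟨j, by omega⟩, b) := by
            simp [Matrix.mul_apply, Matrix.conjTranspose_apply, hB]
        _ = τ ((((⟨k, by omega⟩ : Fin n)) : ℤ) - (((⟨j, by omega⟩ : Fin n)) : ℤ)) a b :=
            hcol _ _ a b
        _ = τ ((k:ℤ) - (j:ℤ)) a b := by norm_num
    rw [h1, h2]
    have hint : ((k:ℤ) + 1) - ((j:ℤ) + 1) = (k:ℤ) - (j:ℤ) := by ring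
    rw [hint]
  obtain ⟨u, huu, huAB⟩ := exists_unitary_mul_eq A B hAB
  have huu1 : uᴴ * u = 1 := Matrix.mem_unitaryGroup_iff'.1 huu
  -- the shift property
  have hshift : ∀ (k : ℕ) (hk1 : k + 1 < n), u * E ⟨k + 1, hk1⟩ = E ⟨k, by omega⟩ := by
    intro k hk1
    ext i a
    have h1 := congrFun (congrFun huAB i) (⟨k, by omega⟩, a)
    simpa [Matrix.mul_apply, hA, hB, hE] using h1
  have hup : ∀ (k : ℕ) (hk1 : k + 1 < n), uᴴ * E ⟨k, by omega⟩ = E ⟨k + 1, hk1⟩ := by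
    intro k hk1
    rw [← hshift k hk1, ← Matrix.mul_assoc, huu1, Matrix.one_mul]
  have hpow : ∀ (m k : ℕ) (h : k + m < n), uᴴ ^ m * E ⟨k, by omega⟩ = E ⟨k + m, h⟩ := by
    intro m
    induction m with
    | zero => intro k h; simp
    | succ m ih =>
      intro k h
      rw [pow_succ, Matrix.mul_assoc, hup k (by omega), ih (k+1) (by omega)]
      exact congrArg E (Fin.ext (by simp; try omega))
  set z : Fin n := ⟨0, hn⟩ with hz
  have hposkey : ∀ (m : ℕ) (hm : m < n), (E z)ᴴ * u ^ m * E z = τ (m : ℤ) := by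
    intro m hm
    have h1 : uᴴ ^ m * E z = E ⟨m, hm⟩ := by
      rw [hpow m 0 (by omega)]
      exact congrArg E (Fin.ext (by simp; try omega))
    calc (E z)ᴴ * u ^ m * E z = (uᴴ ^ m * E z)ᴴ * E z := by
          rw [Matrix.conjTranspose_mul, Matrix.conjTranspose_pow,
            Matrix.conjTranspose_conjTranspose]
      _ = (E ⟨m, hm⟩)ᴴ * E z := by rw [h1]
      _ = τ (((⟨m, hm⟩ : Fin n) : ℤ) - ((z : Fin n) : ℤ)) := hgram _ _
      _ = τ (m : ℤ) := by norm_num [hz]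
  have hnegkey : ∀ (m : ℕ) (hm : m < n), (E z)ᴴ * uᴴ ^ m * E z = τ (-(m : ℤ)) := by
    intro m hm
    have h1 : uᴴ ^ m * E z = E ⟨m, hm⟩ := by
      rw [hpow m 0 (by omega)]
      exact congrArg E (Fin.ext (by simp; try omega))
    calc (E z)ᴴ * uᴴ ^ m * E z = (E z)ᴴ * (uᴴ ^ m * E z) := by rw [Matrix.mul_assoc]
      _ = (E z)ᴴ * E ⟨m, hm⟩ := by rw [h1]
      _ = τ (((z : Fin n) : ℤ) - ((⟨m, hm⟩ : Fin n) : ℤ)) := hgram _ _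
      _ = τ (-(m : ℤ)) := by norm_num [hz]
  -- reindex to `Fin (n * p)`
  set e : Fin n × Fin p ≃ Fin (n * p) := finProdFinEquiv with he
  set u' : Matrix (Fin (n * p)) (Fin (n * p)) ℂ := u.submatrix e.symm e.symm with hu'
  set w : Matrix (Fin (n * p)) (Fin p) ℂ := (E z).submatrix e.symm id with hw
  have hsubmul : ∀ (M N : Matrix (Fin n × Fin p) (Fin n × Fin p) ℂ),
      M.submatrix e.symm e.symm * N.submatrix e.symm e.symm
        = (M * N).submatrix e.symm e.symm :=
    fun M N => Matrix.submatrix_mul_equiv M N _ _ _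
  have hsubpow : ∀ (M : Matrix (Fin n × Fin p) (Fin n × Fin p) ℂ) (m : ℕ),
      (M.submatrix e.symm e.symm) ^ m = (M ^ m).submatrix e.symm e.symm := by
    intro M m
    induction m with
    | zero => rw [pow_zero, pow_zero, Matrix.submatrix_one_equiv]
    | succ m ih => rw [pow_succ, pow_succ, ih, hsubmul]
  have hu'conj : u'ᴴ = uᴴ.submatrix e.symm e.symm := by
    rw [hu', Matrix.conjTranspose_submatrix]
  have hmem : u' ∈ Matrix.unitaryGroup (Fin (n * p)) ℂ := by
    apply Matrix.mem_unitaryGroup_iff'.2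
    show u'ᴴ * u' = 1
    rw [hu'conj, hu', hsubmul, huu1, Matrix.submatrix_one_equiv]
  have hsand : ∀ (M : Matrix (Fin n × Fin p) (Fin n × Fin p) ℂ),
      wᴴ * M.submatrix e.symm e.symm * w = (E z)ᴴ * M * E z := by
    intro M
    rw [hw, Matrix.conjTranspose_submatrix, Matrix.submatrix_mul_equiv,
      Matrix.submatrix_mul_equiv, Matrix.submatrix_id_id]
  have key2 : ∀ ℓ : ℤ, |ℓ| ≤ (n : ℤ) - 1 → τ ℓ = wᴴ * upow u' ℓ * w := by
    intro ℓ hℓ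
    rcases le_or_gt 0 ℓ with h0 | h0
    · rw [abs_of_nonneg h0] at hℓ
      have hm : ℓ.toNat < n := by omega
      have hup : upow u' ℓ = u' ^ ℓ.toNat := if_pos h0
      rw [hup, hu', hsubpow, hsand, hposkey ℓ.toNat hm, Int.toNat_of_nonneg h0]
    · rw [abs_of_neg h0] at hℓ
      have hm : (-ℓ).toNat < n := by omega
      have hup : upow u' ℓ = u'ᴴ ^ (-ℓ).toNat := if_neg (by omega)
      have hval : -(((-ℓ).toNat : ℕ) : ℤ) = ℓ := by omega
      rw [hup, hu'conj, hsubpow, hsand, hnegkey (-ℓ).toNat hm, hval]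
  refine ⟨n * p, u', w, hmem, key2, ?_⟩
  intro k j a b
  have habs : |(k : ℤ) - (j : ℤ)| ≤ (n : ℤ) - 1 := by
    have hk := k.isLt
    have hj := j.isLt
    rw [abs_le]
    constructor <;> omega
  rw [← key2 _ habs]
  exact hT k j a b
end
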